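/- Under the condition Y_ε⁰ > 0 on (-1,1), the first min-max eigenvalue λ_{ε,1}(0) of D_ε(0) satisfies (π/2)² ≤ ε² λ_{ε,1}(0) ≤ (π/2)² + Kε² for some constant K > 0 independent of ε; in particular ε² λ_{ε,1}(0) → (π/2)² as ε → 0. -/

import Mathlib

/-!
The lower bound is the sharp Dirichlet–Poincaré (Wirtinger) inequality
`(π/2)² ∫ v² ≤ ∫ v'²` on `(-1,1)` together with `Y_ε⁰ ≥ 0`. It is proved by a Picone/Riccati
argument: `q = (π/2) tan (πt/2) = -φ'/φ`, with `φ = cos (πt/2)` the ground state, solves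
`q' = (π/2)² + q²`, hence `v'² - (π/2)² v² = (v' + q v)² - (v² q)'`. Integrating over `[-a, a]`
and letting `a → 1`, the boundary term `v² q` vanishes because `|v t| ≤ M (1 - |t|)` while
`|q t| ≤ (π/2) / (1 - |t|)`. The upper bound comes from the test function `φ` and
`Y_ε⁰ ≤ γ²/2`, so `K = γ²/2`. Since `Y_ε⁰ > 0` once `ε < 1/γ`, both bounds hold for all small
`ε`, and the limit follows by squeezing.
-/

/-- The effective potential `Y_ε⁰`. -/
noncomputable def Ypot (γ ε t : ℝ) : ℝ :=
  -(3 * γ ^ 4 * ε ^ 2 * t ^ 2) / (4 * (1 + γ ^ 2 * ε ^ 2 * t ^ 2) ^ 2)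
    + γ ^ 2 / (2 * (1 + γ ^ 2 * ε ^ 2 * t ^ 2))

/-- The first eigenvalue `λ_{ε,1}(0)` of `D_ε(0)`, defined as the infimum of
the quadratic form `ε⁻²∫|v'|² + ∫Y_ε⁰|v|²` over normalized `v ∈ H¹₀(-1,1)`
(formalized as normalized `C¹` functions with Dirichlet boundary values). -/
noncomputable def lamOne (γ ε : ℝ) : ℝ :=
  sInf {r : ℝ | ∃ v : ℝ → ℝ, ContDiff ℝ 1 v ∧ v (-1) = 0 ∧ v 1 = 0 ∧
    (∫ t in (-1 : ℝ)..1, v t ^ 2) = 1 ∧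
    r = (1 / ε ^ 2) * (∫ t in (-1 : ℝ)..1, deriv v t ^ 2)
      + ∫ t in (-1 : ℝ)..1, Ypot γ ε t * v t ^ 2}

open Real Set Filter Topology MeasureTheory intervalIntegral

lemma Ypot_eq (γ ε t : ℝ) :
    Ypot γ ε t = γ ^ 2 * (2 - (γ * ε * t) ^ 2) / (4 * (1 + (γ * ε * t) ^ 2) ^ 2) := by
  have : 1 + (γ * ε * t) ^ 2 ≠ 0 := by positivity
  unfold Ypot
  field_simp
  ring

lemma Ypot_le (γ ε t : ℝ) : Ypot γ ε t ≤ γ ^ 2 / 2 := by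
  rw [Ypot_eq, div_le_div_iff₀ (by positivity) (by norm_num)]
  have hs := sq_nonneg (γ * ε * t)
  nlinarith [mul_nonneg (sq_nonneg γ) (mul_nonneg hs (by linarith : 0 ≤ 4 * (γ * ε * t) ^ 2 + 10))]

lemma Ypot_pos {γ ε t : ℝ} (hγ : γ ≠ 0) (h : (γ * ε * t) ^ 2 < 2) : 0 < Ypot γ ε t := by
  rw [Ypot_eq]
  exact div_pos (mul_pos (by positivity) (by linarith)) (by positivity)

lemma continuous_Ypot (γ ε : ℝ) : Continuous (Ypot γ ε) := by
  unfold Ypot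
  fun_prop (disch := intro; positivity)

theorem integral_sq_deriv_sub_ge_of_riccati {v q : ℝ → ℝ} {k a b : ℝ} (hab : a ≤ b)
    (hv : ContDiff ℝ 1 v) (hq : ∀ t ∈ Icc a b, HasDerivAt q (k + q t ^ 2) t) :
    v a ^ 2 * q a - v b ^ 2 * q b ≤ ∫ t in a..b, (deriv v t ^ 2 - k * v t ^ 2) := by
  have hdv : ∀ t, HasDerivAt v (deriv v t) t := fun t =>
    ((hv.differentiable one_ne_zero) t).hasDerivAt
  have hvc := hv.continuous
  have hvd := hv.continuous_deriv le_rfl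
  have hqc : ContinuousOn q (uIcc a b) := fun t ht =>
    (hq t (by rwa [uIcc_of_le hab] at ht)).continuousAt.continuousWithinAt
  set g := fun t => 2 * v t * deriv v t * q t + v t ^ 2 * (k + q t ^ 2)
  have hG : ∀ t ∈ uIcc a b, HasDerivAt (fun t => v t ^ 2 * q t) (g t) t := by
    intro t ht
    rw [uIcc_of_le hab] at ht
    refine (((hdv t).pow 2).mul (hq t ht)).congr_deriv ?_
    simp only [g, Pi.pow_apply]
    ring
  have hgi : IntervalIntegrable g volume a b := by
    apply ContinuousOn.intervalIntegrable
    exact (((continuous_const.mul hvc).mul hvd).continuousOn.mul hqc).add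
      ((hvc.pow 2).continuousOn.mul (continuousOn_const.add (hqc.pow 2)))
  have hfi : IntervalIntegrable (fun t => deriv v t ^ 2 - k * v t ^ 2) volume a b :=
    Continuous.intervalIntegrable (by fun_prop) _ _
  have hsq : 0 ≤ ∫ t in a..b, (deriv v t ^ 2 - k * v t ^ 2 + g t) := by
    refine integral_nonneg hab fun t _ => ?_
    have : deriv v t ^ 2 - k * v t ^ 2 + g t = (deriv v t + v t * q t) ^ 2 := by
      ring
    rw [this]
    positivity
  rw [integral_add hfi hgi, integral_eq_sub_of_hasDerivAt hG hgi] at hsq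
  linarith

noncomputable def halfPiTan (t : ℝ) : ℝ := π / 2 * tan (π / 2 * t)

lemma cos_half_pi_mul_pos {t : ℝ} (ht : t ∈ Ioo (-1 : ℝ) 1) : 0 < cos (π / 2 * t) := by
  apply cos_pos_of_mem_Ioo
  constructor <;> nlinarith [pi_pos, ht.1, ht.2]

lemma hasDerivAt_halfPiTan {t : ℝ} (ht : t ∈ Ioo (-1 : ℝ) 1) :
    HasDerivAt halfPiTan ((π / 2) ^ 2 + halfPiTan t ^ 2) t := by
  have hc := (cos_half_pi_mul_pos ht).ne'
  have hlin : HasDerivAt (fun t : ℝ => π / 2 * t) (π / 2) t := by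
    simpa using (hasDerivAt_id t).const_mul (π / 2)
  have h := ((hasDerivAt_tan hc).comp t hlin).const_mul (π / 2)
  rw [one_div, ← inv_one_add_tan_sq hc, inv_inv] at h
  refine h.congr_deriv ?_
  simp only [halfPiTan]
  ring

lemma abs_halfPiTan_mul_le {t : ℝ} (ht : t ∈ Ioo (-1 : ℝ) 1) :
    |halfPiTan t| * (1 - |t|) ≤ π / 2 := by
  have hc := cos_half_pi_mul_pos ht
  have hcos : 1 - |t| ≤ cos (π / 2 * t) := by
    have h := one_sub_mul_le_cos (x := π / 2 * |t|) (by positivity)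
      (by nlinarith [pi_pos, abs_le.mpr ⟨ht.1.le, ht.2.le⟩])
    rwa [← mul_assoc, div_mul_div_cancel₀ pi_ne_zero, div_self two_ne_zero, one_mul,
      ← abs_of_pos (half_pos pi_pos), ← abs_mul, cos_abs] at h
  have hsin : |sin (π / 2 * t)| ≤ 1 := abs_sin_le_one _
  rw [halfPiTan, abs_mul, abs_of_pos (half_pos pi_pos), tan_eq_sin_div_cos, abs_div,
    abs_of_pos hc]
  calc π / 2 * (|sin (π / 2 * t)| / cos (π / 2 * t)) * (1 - |t|)
      ≤ π / 2 * (1 / cos (π / 2 * t)) * cos (π / 2 * t) := by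
        gcongr
        · linarith [abs_lt.mpr ht]
      _ = π / 2 := by rw [mul_assoc, one_div_mul_cancel hc.ne', mul_one]

lemma abs_le_mul_one_sub_abs {v : ℝ → ℝ} {M t : ℝ} (hv : Differentiable ℝ v) (hm : v (-1) = 0)
    (hp : v 1 = 0) (hM : ∀ s ∈ Icc (-1 : ℝ) 1, ‖deriv v s‖ ≤ M) (ht : t ∈ Icc (-1 : ℝ) 1) :
    |v t| ≤ M * (1 - |t|) := by
  have hmvt := fun x (hx : x ∈ Icc (-1 : ℝ) 1) =>
    (convex_Icc (-1 : ℝ) 1).norm_image_sub_le_of_norm_deriv_le (fun z _ => hv z) hM hx ht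
  simp only [Real.norm_eq_abs] at hmvt
  rcases le_total 0 t with h | h
  · rw [abs_of_nonneg h]
    have := hmvt 1 (by norm_num)
    rwa [hp, sub_zero, abs_sub_comm, abs_of_nonneg (sub_nonneg.2 ht.2)] at this
  · rw [abs_of_nonpos h, sub_neg_eq_add, add_comm]
    have := hmvt (-1) (by norm_num)
    rwa [hm, sub_zero, sub_neg_eq_add, abs_of_nonneg (neg_le_iff_add_nonneg.1 ht.1)] at this

lemma tendsto_boundary_term {v : ℝ → ℝ} (hv : ContDiff ℝ 1 v) (hm : v (-1) = 0)
    (hp : v 1 = 0) :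
    Tendsto (fun a => v (-a) ^ 2 * halfPiTan (-a) - v a ^ 2 * halfPiTan a) (𝓝[<] 1) (𝓝 0) := by
  obtain ⟨M, hM⟩ := isCompact_Icc.exists_bound_of_continuousOn
    ((hv.continuous_deriv le_rfl).continuousOn (s := Icc (-1 : ℝ) 1))
  have hbound : ∀ t ∈ Ioo (-1 : ℝ) 1, |v t ^ 2 * halfPiTan t| ≤ π / 2 * M ^ 2 * (1 - |t|) := by
    intro t ht
    have hvt := abs_le_mul_one_sub_abs (hv.differentiable one_ne_zero) hm hp hM
      (Ioo_subset_Icc_self ht)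
    have ht1 : 0 ≤ 1 - |t| := by linarith [abs_lt.mpr ht]
    rw [abs_mul, abs_pow]
    calc |v t| ^ 2 * |halfPiTan t| ≤ (M * (1 - |t|)) ^ 2 * |halfPiTan t| := by gcongr
      _ = M ^ 2 * (1 - |t|) * (|halfPiTan t| * (1 - |t|)) := by ring
      _ ≤ M ^ 2 * (1 - |t|) * (π / 2) := by gcongr; exact abs_halfPiTan_mul_le ht
      _ = π / 2 * M ^ 2 * (1 - |t|) := by ring
  have hlim : Tendsto (fun a : ℝ => π * M ^ 2 * (1 - a)) (𝓝[<] 1) (𝓝 0) := by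
    have hcont : Continuous fun a : ℝ => π * M ^ 2 * (1 - a) := by fun_prop
    simpa using (hcont.tendsto 1).mono_left nhdsWithin_le_nhds
  refine squeeze_zero_norm' ?_ hlim
  filter_upwards [Ioo_mem_nhdsLT (show (0 : ℝ) < 1 by norm_num)] with a ha
  have hneg := hbound (-a) ⟨by linarith [ha.2], by linarith [ha.1]⟩
  have hpos := hbound a ⟨by linarith [ha.1], ha.2⟩
  rw [abs_neg, abs_of_pos ha.1] at hneg
  rw [abs_of_pos ha.1] at hpos
  rw [Real.norm_eq_abs]
  linarith [abs_sub (v (-a) ^ 2 * halfPiTan (-a)) (v a ^ 2 * halfPiTan a)]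

theorem wirtinger_inequality {v : ℝ → ℝ} (hv : ContDiff ℝ 1 v) (hm : v (-1) = 0)
    (hp : v 1 = 0) :
    (π / 2) ^ 2 * ∫ t in (-1 : ℝ)..1, v t ^ 2 ≤ ∫ t in (-1 : ℝ)..1, deriv v t ^ 2 := by
  have hvc := hv.continuous
  have hvd := hv.continuous_deriv le_rfl
  set f := fun t => deriv v t ^ 2 - (π / 2) ^ 2 * v t ^ 2
  have hf : Continuous f := by fun_prop
  have hpicone : ∀ᶠ a in 𝓝[<] 1,
      v (-a) ^ 2 * halfPiTan (-a) - v a ^ 2 * halfPiTan a ≤ ∫ t in (-a)..a, f t := by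
    filter_upwards [Ioo_mem_nhdsLT (show (0 : ℝ) < 1 by norm_num)] with a ha
    refine integral_sq_deriv_sub_ge_of_riccati (by linarith [ha.1]) hv fun t ht => ?_
    exact hasDerivAt_halfPiTan ⟨by linarith [ht.1, ha.2], by linarith [ht.2, ha.2]⟩
  have hlim : Tendsto (fun a => ∫ t in (-a)..a, f t) (𝓝[<] 1) (𝓝 (∫ t in (-1 : ℝ)..1, f t)) := by
    have hP := continuous_primitive (μ := volume) (fun a b => hf.intervalIntegrable a b) 0
    have hcont : Continuous fun a => ∫ t in (-a)..a, f t := by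
      have : (fun a => ∫ t in (-a)..a, f t) = fun a => (∫ t in 0..a, f t) - ∫ t in 0..(-a), f t :=
        funext fun a =>
          (integral_interval_sub_left (hf.intervalIntegrable 0 _) (hf.intervalIntegrable 0 _)).symm
      rw [this]
      exact hP.sub (hP.comp continuous_neg)
    exact (hcont.tendsto 1).mono_left nhdsWithin_le_nhds
  have hsplit : ∫ t in (-1 : ℝ)..1, f t
      = (∫ t in (-1 : ℝ)..1, deriv v t ^ 2) - (π / 2) ^ 2 * ∫ t in (-1 : ℝ)..1, v t ^ 2 := by
    simp only [f]
    rw [integral_sub (f := fun t => deriv v t ^ 2) (g := fun t => (π / 2) ^ 2 * v t ^ 2)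
      (Continuous.intervalIntegrable (by fun_prop) _ _)
      (Continuous.intervalIntegrable (by fun_prop) _ _), intervalIntegral.integral_const_mul]
  linarith [le_of_tendsto_of_tendsto (tendsto_boundary_term hv hm hp) hlim hpicone]

noncomputable def groundState (t : ℝ) : ℝ := cos (π / 2 * t)

lemma contDiff_groundState : ContDiff ℝ 1 groundState := by
  unfold groundState
  fun_prop

lemma deriv_groundState (t : ℝ) : deriv groundState t = -(π / 2 * sin (π / 2 * t)) := by
  have hlin : HasDerivAt (fun t : ℝ => π / 2 * t) (π / 2) t := by
    simpa using (hasDerivAt_id t).const_mul (π / 2)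
  rw [show groundState = fun t => cos (π / 2 * t) from rfl, hlin.cos.deriv]
  ring

lemma integral_groundState_sq : ∫ t in (-1 : ℝ)..1, groundState t ^ 2 = 1 := by
  simp only [groundState]
  rw [integral_comp_mul_left (fun x => cos x ^ 2) (by positivity), integral_cos_sq]
  simp only [mul_neg, mul_one, cos_neg, sin_neg, cos_pi_div_two, smul_eq_mul]
  field_simp
  ring

lemma integral_deriv_groundState_sq :
    ∫ t in (-1 : ℝ)..1, deriv groundState t ^ 2 = (π / 2) ^ 2 := by
  simp only [deriv_groundState, neg_sq, mul_pow]
  rw [intervalIntegral.integral_const_mul,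
    integral_comp_mul_left (fun x => sin x ^ 2) (by positivity), integral_sin_sq]
  simp only [mul_neg, mul_one, cos_neg, sin_neg, cos_pi_div_two, smul_eq_mul]
  field_simp
  ring

/-- `lamOne γ ε` is, by definition, `sInf (normalizedFormValues γ ε)`. -/
def normalizedFormValues (γ ε : ℝ) : Set ℝ :=
  {r : ℝ | ∃ v : ℝ → ℝ, ContDiff ℝ 1 v ∧ v (-1) = 0 ∧ v 1 = 0 ∧
    (∫ t in (-1 : ℝ)..1, v t ^ 2) = 1 ∧
    r = (1 / ε ^ 2) * (∫ t in (-1 : ℝ)..1, deriv v t ^ 2)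
      + ∫ t in (-1 : ℝ)..1, Ypot γ ε t * v t ^ 2}

lemma div_sq_le_of_mem_normalizedFormValues {γ ε r : ℝ}
    (hY : ∀ t ∈ Ioo (-1 : ℝ) 1, 0 < Ypot γ ε t) (hr : r ∈ normalizedFormValues γ ε) :
    (π / 2) ^ 2 / ε ^ 2 ≤ r := by
  obtain ⟨v, hv, hm, hp, hnorm, rfl⟩ := hr
  have hkin : (π / 2) ^ 2 ≤ ∫ t in (-1 : ℝ)..1, deriv v t ^ 2 := by
    simpa [hnorm] using wirtinger_inequality hv hm hp
  have hpot : 0 ≤ ∫ t in (-1 : ℝ)..1, Ypot γ ε t * v t ^ 2 := by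
    rw [integral_of_le (by norm_num), integral_Ioc_eq_integral_Ioo]
    exact setIntegral_nonneg measurableSet_Ioo fun t ht => mul_nonneg (hY t ht).le (sq_nonneg _)
  have : (π / 2) ^ 2 / ε ^ 2 ≤ 1 / ε ^ 2 * ∫ t in (-1 : ℝ)..1, deriv v t ^ 2 := by
    rw [one_div_mul_eq_div]
    gcongr
  linarith

lemma integral_Ypot_mul_groundState_sq_le (γ ε : ℝ) :
    ∫ t in (-1 : ℝ)..1, Ypot γ ε t * groundState t ^ 2 ≤ γ ^ 2 / 2 := by
  have hcont : Continuous fun t => groundState t ^ 2 := contDiff_groundState.continuous.pow 2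
  calc ∫ t in (-1 : ℝ)..1, Ypot γ ε t * groundState t ^ 2
      ≤ ∫ t in (-1 : ℝ)..1, γ ^ 2 / 2 * groundState t ^ 2 := by
        refine integral_mono_on (by norm_num)
          (((continuous_Ypot γ ε).mul hcont).intervalIntegrable _ _)
          ((continuous_const.mul hcont).intervalIntegrable _ _) fun t _ => ?_
        exact mul_le_mul_of_nonneg_right (Ypot_le γ ε t) (sq_nonneg _)
    _ = γ ^ 2 / 2 := by
        rw [intervalIntegral.integral_const_mul, integral_groundState_sq, mul_one]

lemma groundState_mem_normalizedFormValues (γ ε : ℝ) :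
    (π / 2) ^ 2 / ε ^ 2 + ∫ t in (-1 : ℝ)..1, Ypot γ ε t * groundState t ^ 2
      ∈ normalizedFormValues γ ε := by
  refine ⟨groundState, contDiff_groundState, ?_, ?_, integral_groundState_sq, ?_⟩
  · simp [groundState]
  · simp [groundState]
  · rw [integral_deriv_groundState_sq, one_div_mul_eq_div]

lemma lamOne_bounds {γ ε : ℝ} (hε : 0 < ε) (hY : ∀ t ∈ Ioo (-1 : ℝ) 1, 0 < Ypot γ ε t) :
    (π / 2) ^ 2 ≤ ε ^ 2 * lamOne γ ε ∧
      ε ^ 2 * lamOne γ ε ≤ (π / 2) ^ 2 + γ ^ 2 / 2 * ε ^ 2 := by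
  have hε2 : 0 < ε ^ 2 := by positivity
  have hmem := groundState_mem_normalizedFormValues γ ε
  have hlow : (π / 2) ^ 2 / ε ^ 2 ≤ lamOne γ ε :=
    le_csInf ⟨_, hmem⟩ fun r hr => div_sq_le_of_mem_normalizedFormValues hY hr
  have hup : lamOne γ ε ≤ (π / 2) ^ 2 / ε ^ 2 + γ ^ 2 / 2 :=
    (csInf_le ⟨_, fun r hr => div_sq_le_of_mem_normalizedFormValues hY hr⟩ hmem).trans
      (add_le_add_right (integral_Ypot_mul_groundState_sq_le γ ε) _)
  constructor
  · rwa [div_le_iff₀' hε2] at hlow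
  · calc ε ^ 2 * lamOne γ ε ≤ ε ^ 2 * ((π / 2) ^ 2 / ε ^ 2 + γ ^ 2 / 2) := by gcongr
      _ = (π / 2) ^ 2 + γ ^ 2 / 2 * ε ^ 2 := by field_simp

lemma Ypot_pos_of_lt_inv {γ ε : ℝ} (hγ : 0 < γ) (hε : 0 < ε) (hεγ : ε < γ⁻¹) :
    ∀ t ∈ Ioo (-1 : ℝ) 1, 0 < Ypot γ ε t := by
  intro t ht
  have hγε : γ * ε < 1 :=
    calc γ * ε < γ * γ⁻¹ := by gcongr
      _ = 1 := mul_inv_cancel₀ hγ.ne'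
  have ht2 : t ^ 2 < 1 := by nlinarith [ht.1, ht.2]
  have hs : (γ * ε * t) ^ 2 < 2 := by
    rw [mul_pow]
    nlinarith [mul_pos hγ hε, sq_nonneg t]
  exact Ypot_pos hγ.ne' hs

theorem stmt_10 (γ : ℝ) (hγ : 0 < γ) :
    (∃ K : ℝ, 0 < K ∧ ∀ ε : ℝ, 0 < ε →
      (∀ t ∈ Set.Ioo (-1 : ℝ) 1, 0 < Ypot γ ε t) →
      (Real.pi / 2) ^ 2 ≤ ε ^ 2 * lamOne γ ε ∧
      ε ^ 2 * lamOne γ ε ≤ (Real.pi / 2) ^ 2 + K * ε ^ 2) ∧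
    Filter.Tendsto (fun ε => ε ^ 2 * lamOne γ ε)
      (nhdsWithin 0 (Set.Ioi 0)) (nhds ((Real.pi / 2) ^ 2)) := by
  refine ⟨⟨γ ^ 2 / 2, by positivity, fun ε hε hY => lamOne_bounds hε hY⟩, ?_⟩
  have hsmall : ∀ᶠ ε in 𝓝[>] (0 : ℝ), ∀ t ∈ Ioo (-1 : ℝ) 1, 0 < Ypot γ ε t := by
    filter_upwards [Ioo_mem_nhdsGT (inv_pos.2 hγ)] with ε hε
    exact Ypot_pos_of_lt_inv hγ hε.1 hε.2
  have hupper : Tendsto (fun ε : ℝ => (π / 2) ^ 2 + γ ^ 2 / 2 * ε ^ 2) (𝓝[>] 0)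
      (𝓝 ((π / 2) ^ 2)) := by
    have hcont : Continuous fun ε : ℝ => (π / 2) ^ 2 + γ ^ 2 / 2 * ε ^ 2 := by fun_prop
    simpa using (hcont.tendsto 0).mono_left nhdsWithin_le_nhds
  refine tendsto_of_tendsto_of_tendsto_of_le_of_le' tendsto_const_nhds hupper ?_ ?_
  · filter_upwards [self_mem_nhdsWithin, hsmall] with ε hε hY
    exact (lamOne_bounds hε hY).1
  · filter_upwards [self_mem_nhdsWithin, hsmall] with ε hε hY
    exact (lamOne_bounds hε hY).2
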